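/- arXiv:2102.02576 — 8 statements merged into one kernel-verified Lean document; each statement's English description precedes it below -/
import Mathlib

section
/- Let F be a closure system on a finite set G with G ∈ F, and let R be a closure system with R ⊆ F. Then R is join-irreducible in the lattice of closure systems contained in F if and only if there exists A ∈ F with A ≠ G such that R = {G, A}. -/
variable {α : Type*}

/-- A closure system on (the universe of) `α`: contains the full set and is
closed under (nonempty) intersections. -/
def IsClosureSystem (F : Set (Set α)) : Prop :=
  Set.univ ∈ F ∧ ∀ S ⊆ F, S.Nonempty → ⋂₀ S ∈ F

/-- `R` is a closure system contained in `F` (an element of the ideal `↓F`). -/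
def DownF (F R : Set (Set α)) : Prop := IsClosureSystem R ∧ R ⊆ F

/-- Models of the implication `A → B`. -/
def FAB (A B : Set α) : Set (Set α) := {D | ¬ A ⊆ D ∨ B ⊆ D}

/-- Closure operator of a closure system `R`. -/
def clOp (R : Set (Set α)) (X : Set α) : Set α := ⋂₀ {D | D ∈ R ∧ X ⊆ D}

/-- The closure system contained in `F` generated by the family `X`. -/
def genCS (F X : Set (Set α)) : Set (Set α) :=
  ⋂₀ {T | IsClosureSystem T ∧ T ⊆ F ∧ X ⊆ T}

/-- `R'` is covered by `R` in the lattice `↓F` of closure systems contained in `F`. -/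
def CoversIn (F R' R : Set (Set α)) : Prop :=
  DownF F R' ∧ DownF F R ∧ R' ⊂ R ∧ ¬ ∃ T, DownF F T ∧ R' ⊂ T ∧ T ⊂ R

/-- `A` is covered by `B` in the lattice `(F, ⊆)`. -/
def CoversF (F : Set (Set α)) (A B : Set α) : Prop :=
  A ∈ F ∧ B ∈ F ∧ A ⊂ B ∧ ¬ ∃ C ∈ F, A ⊂ C ∧ C ⊂ B

/-- `A` is meet-irreducible in the lattice `(R, ⊆)` of a closure system `R`. -/
def MeetIrredSet (R : Set (Set α)) (A : Set α) : Prop :=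
  A ∈ R ∧ A ≠ Set.univ ∧ ¬ ∃ B ∈ R, ∃ C ∈ R, A ⊂ B ∧ A ⊂ C ∧ A = B ∩ C

/-- `R` is meet-irreducible in the lattice `↓F`. -/
def MeetIrredDown (F R : Set (Set α)) : Prop :=
  DownF F R ∧ R ≠ F ∧ ¬ ∃ T, DownF F T ∧ ∃ U, DownF F U ∧ R ⊂ T ∧ R ⊂ U ∧ R = T ∩ U

/-- `R` is join-irreducible in the lattice `↓F` (bottom is `{univ}`,
join of a family is the generated closure system). -/
def JoinIrredDown (F R : Set (Set α)) : Prop :=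
  DownF F R ∧ R ≠ {Set.univ} ∧
    ∀ Y : Set (Set (Set α)), Y.Finite → (∀ T ∈ Y, DownF F T) →
      R = genCS F (⋃₀ Y) → R ∈ Y

lemma pairCS (A : Set α) : IsClosureSystem ({Set.univ, A} : Set (Set α)) := by
  constructor
  · exact Or.inl rfl
  · intro S hS hSne
    by_cases hA : A ∈ S
    · right
      apply subset_antisymm
      · exact Set.sInter_subset_of_mem hA
      · intro x hx D hD
        rcases hS hD with h | h
        · simp [h]
        · simp only [Set.mem_singleton_iff] at h; exact h ▸ hx
    · left
      rw [Set.eq_univ_iff_forall]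
      intro x D hD
      rcases hS hD with h | h
      · simp [h]
      · simp only [Set.mem_singleton_iff] at h
        exact absurd (h ▸ hD) hA

lemma genCS_eq_self {F R : Set (Set α)} (h : DownF F R) : genCS F R = R := by
  apply subset_antisymm
  · exact Set.sInter_subset_of_mem ⟨h.1, h.2, subset_rfl⟩
  · intro B hB T hT
    exact hT.2.2 hB

lemma sUnion_subset_genCS (F Y : Set (Set α)) : Y ⊆ genCS F Y :=
  fun D hD => Set.mem_sInter.mpr fun _ hT => hT.2.2 hD

/-- characterization of join-irreducible elements of ↓F. -/
theorem stmt_3 {α : Type*} [Fintype α] (F R : Set (Set α))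
    (hF : IsClosureSystem F) (hG : Set.univ ∈ F) (hR : DownF F R) :
    JoinIrredDown F R ↔ ∃ A ∈ F, A ≠ Set.univ ∧ R = {Set.univ, A} := by
  constructor
  · rintro ⟨⟨hRcs, hRF⟩, hne, hirr⟩
    have huniv : Set.univ ∈ R := hRcs.1
    obtain ⟨A0, hA0R, hA0ne⟩ : ∃ A, A ∈ R ∧ A ≠ Set.univ := by
      by_contra h
      push_neg at h
      apply hne
      apply subset_antisymm
      · intro B hB
        simp [h B hB]
      · intro B hB
        simp only [Set.mem_singleton_iff] at hB
        exact hB ▸ huniv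
    set Y : Set (Set (Set α)) :=
      (fun A => ({Set.univ, A} : Set (Set α))) '' (R \ {Set.univ}) with hYdef
    have hUY : ⋃₀ Y = R := by
      apply subset_antisymm
      · rintro B ⟨T, ⟨A, ⟨hAR, _⟩, rfl⟩, hBT⟩
        rcases hBT with rfl | hBT
        · exact huniv
        · simp only [Set.mem_singleton_iff] at hBT
          exact hBT ▸ hAR
      · intro B hB
        rcases eq_or_ne B Set.univ with rfl | hB'
        · exact ⟨{Set.univ, A0}, ⟨A0, ⟨hA0R, hA0ne⟩, rfl⟩, Or.inl rfl⟩
        · exact ⟨{Set.univ, B}, ⟨B, ⟨hB, hB'⟩, rfl⟩, Or.inr rfl⟩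
    have hmem := hirr Y (Set.toFinite Y)
      (by
        rintro T ⟨A, ⟨hAR, _⟩, rfl⟩
        refine ⟨pairCS A, ?_⟩
        intro D hD
        rcases hD with rfl | hD
        · exact hG
        · simp only [Set.mem_singleton_iff] at hD
          exact hD ▸ hRF hAR)
      (by rw [hUY, genCS_eq_self ⟨hRcs, hRF⟩])
    obtain ⟨A, ⟨hAR, hAne⟩, hEq⟩ := hmem
    exact ⟨A, hRF hAR, by simpa using hAne, hEq.symm⟩
  · rintro ⟨A, hAF, hAne, rfl⟩
    refine ⟨hR, ?_, ?_⟩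
    · intro h
      apply hAne
      have : A ∈ ({Set.univ} : Set (Set α)) := h ▸ (by simp)
      simpa using this
    · intro Y _ hYdown hgen
      have hsub : ⋃₀ Y ⊆ genCS F (⋃₀ Y) := sUnion_subset_genCS F _
      by_cases hA : A ∈ ⋃₀ Y
      · obtain ⟨T, hTY, hAT⟩ := hA
        have hTsub : T ⊆ ({Set.univ, A} : Set (Set α)) := by
          rw [hgen]
          exact fun D hD => hsub ⟨T, hTY, hD⟩
        have hTeq : T = ({Set.univ, A} : Set (Set α)) := by
          apply subset_antisymm hTsub
          intro D hD
          rcases hD with rfl | hD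
          · exact (hYdown T hTY).1.1
          · simp only [Set.mem_singleton_iff] at hD
            exact hD ▸ hAT
        exact hTeq ▸ hTY
      · exfalso
        have hsing : DownF F ({Set.univ} : Set (Set α)) := by
          refine ⟨?_, ?_⟩
          · have := pairCS (α := α) Set.univ
            rwa [Set.pair_eq_singleton] at this
          · intro D hD
            simp only [Set.mem_singleton_iff] at hD
            exact hD ▸ hG
        have hYsub : ⋃₀ Y ⊆ ({Set.univ} : Set (Set α)) := by
          intro D hD
          have hD2 : D ∈ ({Set.univ, A} : Set (Set α)) := hgen ▸ hsub hD
          rcases hD2 with rfl | hD2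
          · rfl
          · simp only [Set.mem_singleton_iff] at hD2
            exact absurd (hD2 ▸ hD) hA
        have : genCS F (⋃₀ Y) ⊆ ({Set.univ} : Set (Set α)) :=
          Set.sInter_subset_of_mem ⟨hsing.1, hsing.2, hYsub⟩
        have hAmem : A ∈ genCS F (⋃₀ Y) := hgen ▸ (by simp)
        exact hAne (by simpa using this hAmem)
end

section
/- Let F be a closure system on a finite set G, and let R ⊆ F be a closure system. Then R is meet-irreducible in the lattice of closure systems contained in F if and only if there exist A ∈ F and i ∈ G such that A is covered in (F, ⊆) by the F-closure of A ∪ {i}, and R = F_{A,{i}} ∩ F. -/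
variable {α : Type*}

/-!
`R` is meet-irreducible in the finite lattice `↓F` exactly when some `A ∈ F \ R` lies in every
closure system of `↓F` strictly above `R` (any new member of the unique upper cover of `R` will
do). Adjoining an arbitrary `D ∈ F \ R` to `R` then gives `A = D ∩ E` with `E ∈ R`. Hence, for
`i` in the `R`-closure of `A` but not in `A`, the members of `R` are exactly the members of `F`
respecting the implication `A → i`, and no member of `F` lies strictly between `A` and the
`F`-closure of `A ∪ {i}`. Conversely, if `A` is covered by that closure `C` and
`R = F_{A,{i}} ∩ F`, any `D` gained in an extension `T ⊋ R` contains `A` but not `i`, so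
`A ⊆ D ∩ C ⊊ C` and the covering forces `A = D ∩ C ∈ T`.
-/

open Set

variable {F R : Set (Set α)}

theorem IsClosureSystem.inter_mem (hF : IsClosureSystem F) {D E : Set α} (hD : D ∈ F)
    (hE : E ∈ F) : D ∩ E ∈ F := by
  rw [← sInter_pair]
  exact hF.2 _ (pair_subset hD hE) (insert_nonempty _ _)

theorem IsClosureSystem.clOp_mem (hF : IsClosureSystem F) (X : Set α) : clOp F X ∈ F :=
  hF.2 _ (fun _ hD => hD.1) ⟨univ, hF.1, subset_univ X⟩

theorem subset_clOp (F : Set (Set α)) (X : Set α) : X ⊆ clOp F X :=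
  fun _ hx _ hD => hD.2 hx

theorem clOp_subset {X D : Set α} (hD : D ∈ F) (hXD : X ⊆ D) : clOp F X ⊆ D :=
  sInter_subset_of_mem ⟨hD, hXD⟩

theorem DownF.inter {T U : Set (Set α)} (hT : DownF F T) (hU : DownF F U) :
    DownF F (T ∩ U) :=
  ⟨⟨⟨hT.1.1, hU.1.1⟩, fun S hS hSne =>
      ⟨hT.1.2 S (fun _ hD => (hS hD).1) hSne, hU.1.2 S (fun _ hD => (hS hD).2) hSne⟩⟩,
    inter_subset_left.trans hT.2⟩

/-- The closure system generated by `R` and one more set `D`. -/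
def adjoinCS (R : Set (Set α)) (D : Set α) : Set (Set α) := R ∪ (D ∩ ·) '' R

theorem IsClosureSystem.adjoinCS (hR : IsClosureSystem R) (D : Set α) :
    IsClosureSystem (adjoinCS R D) := by
  refine ⟨Or.inl hR.1, fun S hS hSne => ?_⟩
  by_cases hSR : S ⊆ R
  · exact Or.inl (hR.2 S hSR hSne)
  obtain ⟨X, hXS, hXR⟩ := not_subset.1 hSR
  obtain ⟨E₀, hE₀, rfl⟩ := (hS hXS).resolve_left hXR
  -- once one member of `S` lies below `D`, all of `⋂₀ S` does
  set 𝓔 : Set (Set α) := {E | E ∈ R ∧ (E ∈ S ∨ D ∩ E ∈ S)}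
  have h𝓔 : ⋂₀ S = D ∩ ⋂₀ 𝓔 := by
    ext x
    simp only [mem_sInter, mem_inter_iff]
    constructor
    · intro hx
      refine ⟨(hx _ hXS).1, fun E ⟨_, hE⟩ => hE.elim (hx E) fun h => (hx _ h).2⟩
    · rintro ⟨hxD, hx⟩ Y hY
      rcases hS hY with hYR | ⟨E, hER, rfl⟩
      · exact hx Y ⟨hYR, Or.inl hY⟩
      · exact ⟨hxD, hx E ⟨hER, Or.inr hY⟩⟩
  rw [h𝓔]
  exact Or.inr ⟨_, hR.2 𝓔 (fun _ hE => hE.1) ⟨E₀, hE₀, Or.inr hXS⟩, rfl⟩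

theorem DownF.adjoinCS (hF : IsClosureSystem F) (hR : DownF F R) {D : Set α} (hD : D ∈ F) :
    DownF F (adjoinCS R D) := by
  refine ⟨hR.1.adjoinCS D, union_subset hR.2 ?_⟩
  rintro _ ⟨E, hE, rfl⟩
  exact hF.inter_mem hD (hR.2 hE)

def ForcedAbove (F R : Set (Set α)) (A : Set α) : Prop :=
  A ∈ F ∧ A ∉ R ∧ ∀ T, DownF F T → R ⊂ T → A ∈ T

theorem ForcedAbove.meetIrredDown {A : Set α} (hR : DownF F R) (hA : ForcedAbove F R A) :
    MeetIrredDown F R := by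
  refine ⟨hR, fun h => hA.2.1 (h ▸ hA.1), ?_⟩
  rintro ⟨T, hT, U, hU, hRT, hRU, rfl⟩
  exact hA.2.1 ⟨hA.2.2 T hT hRT, hA.2.2 U hU hRU⟩

theorem MeetIrredDown.exists_least_ssuperset [Finite α] (hR : MeetIrredDown F R)
    (hF : IsClosureSystem F) :
    ∃ T₀, DownF F T₀ ∧ R ⊂ T₀ ∧ ∀ T, DownF F T → R ⊂ T → T₀ ⊆ T := by
  obtain ⟨hRF, hR_ne_F, hirr⟩ := hR
  have hF_above : F ∈ {T | DownF F T ∧ R ⊂ T} :=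
    ⟨⟨hF, subset_rfl⟩, ssubset_of_subset_of_ne hRF.2 hR_ne_F⟩
  obtain ⟨T₀, ⟨hT₀, hRT₀⟩, hmin⟩ := (toFinite _).exists_minimal ⟨F, hF_above⟩
  refine ⟨T₀, hT₀, hRT₀, fun T hT hRT => ?_⟩
  have hR_ne : R ≠ T₀ ∩ T := fun h => hirr ⟨T₀, hT₀, T, hT, hRT₀, hRT, h⟩
  have hR_lt : R ⊂ T₀ ∩ T := ssubset_of_subset_of_ne (subset_inter hRT₀.1 hRT.1) hR_ne
  exact (hmin ⟨hT₀.inter hT, hR_lt⟩ inter_subset_left).trans inter_subset_right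

theorem MeetIrredDown.exists_forcedAbove [Finite α] (hR : MeetIrredDown F R)
    (hF : IsClosureSystem F) : ∃ A, ForcedAbove F R A := by
  obtain ⟨T₀, hT₀, hRT₀, hleast⟩ := hR.exists_least_ssuperset hF
  obtain ⟨A, hAT₀, hAR⟩ := exists_of_ssubset hRT₀
  exact ⟨A, hT₀.2 hAT₀, hAR, fun T hT hRT => hleast T hT hRT hAT₀⟩

theorem ForcedAbove.exists_eq_inter {A D : Set α} (hF : IsClosureSystem F) (hR : DownF F R)
    (hA : ForcedAbove F R A) (hD : D ∈ F) (hDR : D ∉ R) : ∃ E ∈ R, A = D ∩ E := by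
  have hR_lt : R ⊂ adjoinCS R D :=
    ssubset_of_subset_of_ne subset_union_left fun h =>
      hDR (h ▸ Or.inr ⟨univ, hR.1.1, inter_univ D⟩)
  obtain ⟨E, hE, hDE⟩ :=
    (hA.2.2 _ (hR.adjoinCS hF hD) hR_lt).resolve_left hA.2.1
  exact ⟨E, hE, hDE.symm⟩

/-- The witness `i` is any point of `clOp R A \ A`. -/
theorem ForcedAbove.exists_eq_FAB_inter {A : Set α} (hF : IsClosureSystem F) (hR : DownF F R)
    (hA : ForcedAbove F R A) : ∃ i, R = FAB A {i} ∩ F := by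
  have hA_ne : A ≠ clOp R A := fun h => hA.2.1 (h ▸ hR.1.clOp_mem A)
  obtain ⟨i, hiB, hiA⟩ := exists_of_ssubset (ssubset_of_subset_of_ne (subset_clOp R A) hA_ne)
  refine ⟨i, ext fun E => ⟨fun hE => ⟨?_, hR.2 hE⟩, fun ⟨hEi, hEF⟩ => ?_⟩⟩
  · by_cases hAE : A ⊆ E
    · exact Or.inr (singleton_subset_iff.2 (clOp_subset hE hAE hiB))
    · exact Or.inl hAE
  · by_contra hER
    obtain ⟨E', hE', rfl⟩ := hA.exists_eq_inter hF hR hEF hER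
    have hiE : i ∈ E := singleton_subset_iff.1 (hEi.resolve_left (not_not.2 inter_subset_left))
    exact hiA ⟨hiE, clOp_subset hE' inter_subset_right hiB⟩

theorem ForcedAbove.coversF_clOp {A : Set α} {i : α} (hF : IsClosureSystem F)
    (hR : DownF F R) (hA : ForcedAbove F R A) (hRi : R = FAB A {i} ∩ F) :
    CoversF F A (clOp F (A ∪ {i})) := by
  have hiA : i ∉ A := fun hi => hA.2.1 (hRi ▸ ⟨Or.inr (singleton_subset_iff.2 hi), hA.1⟩)
  have hAC : A ∪ {i} ⊆ clOp F (A ∪ {i}) := subset_clOp F _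
  refine ⟨hA.1, hF.clOp_mem _,
    ⟨subset_union_left.trans hAC, fun h => hiA (h (hAC (Or.inr rfl)))⟩, ?_⟩
  rintro ⟨E, hEF, hAE, hEC⟩
  have hiE : i ∉ E := fun hi =>
    hEC.2 (clOp_subset hEF (union_subset hAE.1 (singleton_subset_iff.2 hi)))
  have hER : E ∉ R := fun hE => by
    rw [hRi] at hE
    exact hE.1.elim (· hAE.1) (fun h => hiE (singleton_subset_iff.1 h))
  obtain ⟨E', hE', hAeq⟩ := hA.exists_eq_inter hF hR hEF hER
  have hAE' : A ⊆ E' := hAeq ▸ inter_subset_right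
  have hiE' : i ∈ E' := by
    rw [hRi] at hE'
    exact singleton_subset_iff.1 (hE'.1.resolve_left (not_not.2 hAE'))
  have hEE' : E ⊆ E' :=
    hEC.1.trans (clOp_subset (hR.2 hE') (union_subset hAE' (singleton_subset_iff.2 hiE')))
  exact hAE.ne (hAeq.trans (inter_eq_left.2 hEE'))

theorem forcedAbove_FAB_inter {A : Set α} {i : α} (hcov : CoversF F A (clOp F (A ∪ {i}))) :
    ForcedAbove F (FAB A {i} ∩ F) A := by
  obtain ⟨hAF, hCF, hAC, hnot⟩ := hcov
  set C := clOp F (A ∪ {i})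
  have hiC : i ∈ C := subset_clOp F _ (Or.inr rfl)
  have hiA : i ∉ A := fun hi => hAC.2 (clOp_subset hAF (union_subset subset_rfl
    (singleton_subset_iff.2 hi)))
  refine ⟨hAF, fun h => h.1.elim (· subset_rfl) (fun h => hiA (singleton_subset_iff.1 h)), ?_⟩
  intro T hT hRT
  obtain ⟨D, hDT, hDR⟩ := exists_of_ssubset hRT
  have hAD : A ⊆ D := by_contra fun h => hDR ⟨Or.inl h, hT.2 hDT⟩
  have hiD : i ∉ D := fun h => hDR ⟨Or.inr (singleton_subset_iff.2 h), hT.2 hDT⟩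
  have hCR : C ∈ FAB A {i} ∩ F := ⟨Or.inr (singleton_subset_iff.2 hiC), hCF⟩
  have hDC : D ∩ C ∈ T := hT.1.inter_mem hDT (hRT.1 hCR)
  have hA_eq : A = D ∩ C := by
    by_contra hne
    exact hnot ⟨D ∩ C, hT.2 hDC, ssubset_of_subset_of_ne (subset_inter hAD hAC.1) hne,
      ⟨inter_subset_right, fun h => hiD (h hiC).1⟩⟩
  exact hA_eq ▸ hDC

/-- characterization of meet-irreducible elements of ↓F. -/
theorem stmt_7 {α : Type*} [Fintype α] (F R : Set (Set α))
    (hF : IsClosureSystem F) (hR : DownF F R) :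
    MeetIrredDown F R ↔
      ∃ A ∈ F, ∃ i : α, CoversF F A (clOp F (A ∪ {i})) ∧ R = FAB A {i} ∩ F := by
  constructor
  · intro hirr
    obtain ⟨A, hA⟩ := hirr.exists_forcedAbove hF
    obtain ⟨i, hRi⟩ := hA.exists_eq_FAB_inter hF hR
    exact ⟨A, hA.1, i, hA.coversF_clOp hF hR hRi, hRi⟩
  · rintro ⟨A, -, i, hcov, rfl⟩
    exact (forcedAbove_FAB_inter hcov).meetIrredDown hR
end

section
/- Let F be a closure system on a finite set G, and let A, B ∈ F with A covered by B in (F, ⊆). If A is meet-irreducible in the lattice (F, ⊆), then F_{A,B} ∩ F = F \ {A}; in particular, F \ {A} is a maximal meet-irreducible element of the lattice of closure systems contained in F. -/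
variable {α : Type*}

/-- if A ≺_F B and A is meet-irreducible in (F,⊆), then
F_{A,B} ∩ F = F \ {A} is a maximal meet-irreducible element of ↓F. -/
theorem stmt_8 {α : Type*} [Fintype α] (F : Set (Set α)) (hF : IsClosureSystem F)
    (A B : Set α) (hA : A ∈ F) (hB : B ∈ F) (hcov : CoversF F A B)
    (hmi : MeetIrredSet F A) :
    FAB A B ∩ F = F \ {A} ∧
      MeetIrredDown F (F \ {A}) ∧
      ∀ R : Set (Set α), MeetIrredDown F R → F \ {A} ⊆ R → R = F \ {A} := by

  obtain ⟨hAF, hBF, hAB, hnocov⟩ := hcov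
  obtain ⟨-, hAne, hnomi⟩ := hmi
  -- key lemma: any D ∈ F strictly above A contains B
  have key : ∀ D ∈ F, A ⊆ D → D ≠ A → B ⊆ D := by
    intro D hD hAD hDA
    have hDB : D ∩ B ∈ F := by
      have := hF.2 {D, B} (by rintro x (rfl | rfl) <;> assumption) ⟨D, by simp⟩
      simpa [Set.sInter_pair] using this
    have hsub : A ⊆ D ∩ B := Set.subset_inter hAD hAB.1
    by_cases h : D ∩ B = A
    · exact absurd ⟨D, hD, B, hBF, hAD.ssubset_of_ne (Ne.symm hDA), hAB, h.symm⟩ hnomi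
    · have h1 : A ⊂ D ∩ B := hsub.ssubset_of_ne (Ne.symm h)
      by_cases h2 : D ∩ B = B
      · exact fun x hx => (h2.symm ▸ hx : x ∈ D ∩ B).1
      · exact absurd ⟨D ∩ B, hDB, h1, (Set.inter_subset_right).ssubset_of_ne h2⟩ hnocov
  have h1 : FAB A B ∩ F = F \ {A} := by
    ext D
    simp only [FAB, Set.mem_inter_iff, Set.mem_setOf_eq, Set.mem_diff,
      Set.mem_singleton_iff]
    constructor
    · rintro ⟨h, hD⟩
      refine ⟨hD, ?_⟩
      rintro rfl
      rcases h with h | h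
      · exact h le_rfl
      · exact hAB.2 h
    · rintro ⟨hD, hne⟩
      refine ⟨?_, hD⟩
      by_cases hAD : A ⊆ D
      · exact Or.inr (key D hD hAD hne)
      · exact Or.inl hAD
  have hclos : IsClosureSystem (F \ {A}) := by
    constructor
    · exact ⟨hF.1, by simpa using fun h => hAne h.symm⟩
    · intro S hS hSne
      have hSF : S ⊆ F := fun x hx => (hS hx).1
      refine ⟨hF.2 S hSF hSne, ?_⟩
      simp only [Set.mem_singleton_iff]
      intro heq
      have hBsub : B ⊆ ⋂₀ S := by
        intro x hx
        rw [Set.mem_sInter]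
        intro D hD
        have hAD : A ⊆ D := heq ▸ Set.sInter_subset_of_mem hD
        have hDne : D ≠ A := fun h => (hS hD).2 (by simp [h])
        exact key D (hSF hD) hAD hDne hx
      rw [heq] at hBsub
      exact hAB.2 hBsub
  have hdown : DownF F (F \ {A}) := ⟨hclos, Set.diff_subset⟩
  have hTF : ∀ T, DownF F T → F \ {A} ⊂ T → T = F := by
    intro T hT hlt
    refine hT.2.antisymm ?_
    intro D hD
    by_cases h : D = A
    · obtain ⟨x, hxT, hxn⟩ := Set.exists_of_ssubset hlt
      have hxA : x = A := by
        by_contra hxA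
        exact hxn ⟨hT.2 hxT, hxA⟩
      rw [h, ← hxA]; exact hxT
    · exact hlt.1 ⟨hD, h⟩
  refine ⟨h1, ⟨hdown, ?_, ?_⟩, ?_⟩
  · intro h
    have : A ∈ F \ {A} := by rw [h]; exact hA
    exact this.2 rfl
  · rintro ⟨T, hT, U, hU, hlt1, hlt2, heq⟩
    have hTeq := hTF T hT hlt1
    have hUeq := hTF U hU hlt2
    rw [hTeq, hUeq, Set.inter_self] at heq
    have : A ∈ F \ {A} := by rw [heq]; exact hA
    exact this.2 rfl
  · rintro R ⟨hRd, hRne, -⟩ hsub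
    by_contra hne
    exact hRne (hTF R hRd (hsub.ssubset_of_ne (Ne.symm hne)))
end

section
/- Let F be a closure system on a finite set G with A, B ⊆ G, A ≠ C or B ≠ D for another pair C, D ⊆ G, where A ≺_F B and C ≺_F D are covering pairs in (F,⊆) with A, B, C, D ∈ F. Then F_{A,B} ∩ F ≠ F_{C,D} ∩ F. -/
variable {α : Type*}

/-- distinct covering pairs of (F,⊆) induce distinct closure
systems F_{A,B} ∩ F. -/
theorem stmt_10 {α : Type*} [Fintype α] (F : Set (Set α)) (hF : IsClosureSystem F)
    (A B C D : Set α) (hAB : CoversF F A B) (hCD : CoversF F C D)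
    (hne : A ≠ C ∨ B ≠ D) :
    FAB A B ∩ F ≠ FAB C D ∩ F := by
  obtain ⟨hA, hB, hABs, -⟩ := hAB
  obtain ⟨hC, hD, hCDs, -⟩ := hCD
  intro h
  have hAnot : A ∉ FAB A B := by
    intro hmem
    rcases hmem with h1 | h1
    · exact h1 le_rfl
    · exact hABs.2 (hABs.1.antisymm' h1 ▸ le_rfl)
  have hCnot : C ∉ FAB C D := by
    intro hmem
    rcases hmem with h1 | h1
    · exact h1 le_rfl
    · exact hCDs.2 (hCDs.1.antisymm' h1 ▸ le_rfl)
  have hAnot' : A ∉ FAB C D := by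
    intro hm
    have hm2 : A ∈ FAB A B ∩ F := by rw [h]; exact ⟨hm, hA⟩
    exact hAnot hm2.1
  have hCnot' : C ∉ FAB A B := by
    intro hm
    have hm2 : C ∈ FAB C D ∩ F := by rw [← h]; exact ⟨hm, hC⟩
    exact hCnot hm2.1
  have hCA : C ⊆ A := by by_contra hc; exact hAnot' (Or.inl hc)
  have hAC : A ⊆ C := by by_contra hc; exact hCnot' (Or.inl hc)
  have hACeq : A = C := hAC.antisymm hCA
  have hBmem : B ∈ FAB C D := by
    have hm2 : B ∈ FAB C D ∩ F := by rw [← h]; exact ⟨Or.inr le_rfl, hB⟩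
    exact hm2.1
  have hDmem : D ∈ FAB A B := by
    have hm2 : D ∈ FAB A B ∩ F := by rw [h]; exact ⟨Or.inr le_rfl, hD⟩
    exact hm2.1
  have hCB : C ⊆ B := hACeq ▸ hABs.1
  have hAD : A ⊆ D := by rw [hACeq]; exact hCDs.1.subset
  have hDB : D ⊆ B := by
    rcases hBmem with h1 | h1
    · exact absurd hCB h1
    · exact h1
  have hBD : B ⊆ D := by
    rcases hDmem with h1 | h1
    · exact absurd hAD h1
    · exact h1
  rcases hne with hn | hn
  · exact hn hACeq
  · exact hn (hBD.antisymm hDB)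
end

section
/- Let F be a closure system on a finite set G and R ⊆ F a closure system. Define R̂ as the closure system generated (within ↓F) by the sets {A, G} for all A that are meet-irreducible in (F,⊆) but not meet-irreducible in (R,⊆). Then R̂ is the inclusion-minimal closure system contained in F whose join with R in the lattice ↓F equals F. -/
variable {α : Type*}

lemma subset_genCS (F X : Set (Set α)) : X ⊆ genCS F X := by
  intro A hA
  exact Set.mem_sInter.mpr fun T hT => hT.2.2 hA

lemma genCS_subset {F X T : Set (Set α)} (hT : IsClosureSystem T) (hTF : T ⊆ F)
    (hXT : X ⊆ T) : genCS F X ⊆ T :=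
  Set.sInter_subset_of_mem ⟨hT, hTF, hXT⟩

lemma genCS_downF {F X : Set (Set α)} (hF : IsClosureSystem F) (hXF : X ⊆ F) :
    DownF F (genCS F X) := by
  refine ⟨⟨?_, ?_⟩, genCS_subset hF (le_refl F) hXF⟩
  · exact Set.mem_sInter.mpr fun T hT => hT.1.1
  · intro S hS hne
    refine Set.mem_sInter.mpr fun T hT => ?_
    exact hT.1.2 S (fun Z hZ => Set.mem_sInter.mp (hS hZ) T hT) hne

/-- Every member of a finite closure system `F` belongs to any closure system
containing all meet-irreducibles of `F`. -/
lemma mem_of_irred {α : Type*} [Fintype α] {F T : Set (Set α)}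
    (hT1 : Set.univ ∈ T) (hT2 : ∀ S ⊆ T, S.Nonempty → ⋂₀ S ∈ T)
    (hirr : ∀ A, MeetIrredSet F A → A ∈ T) :
    ∀ A ∈ F, A ∈ T := by
  have key : ∀ n : ℕ, ∀ A ∈ F, Aᶜ.ncard ≤ n → A ∈ T := by
    intro n
    induction n with
    | zero =>
      intro A hA h
      have hAc : Aᶜ = ∅ := (Set.ncard_eq_zero (Set.toFinite _)).mp (Nat.le_zero.mp h)
      have hu : A = Set.univ := by
        rw [← compl_compl A, hAc, Set.compl_empty]
      exact hu ▸ hT1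
    | succ n ih =>
      intro A hA h
      by_cases hu : A = Set.univ
      · exact hu ▸ hT1
      by_cases hi : MeetIrredSet F A
      · exact hirr A hi
      · have hex : ∃ B ∈ F, ∃ C ∈ F, A ⊂ B ∧ A ⊂ C ∧ A = B ∩ C := by
          by_contra hc
          exact hi ⟨hA, hu, hc⟩
        obtain ⟨B, hB, C, hC, hAB, hAC, hABC⟩ := hex
        have hBc : Bᶜ.ncard ≤ n := by
          have hlt : Bᶜ ⊂ Aᶜ := by
            rw [Set.ssubset_iff_of_subset (Set.compl_subset_compl.mpr hAB.1)]
            obtain ⟨x, hxB, hxA⟩ := Set.exists_of_ssubset hAB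
            exact ⟨x, by simpa using hxA, by simpa using hxB⟩
          have := Set.ncard_lt_ncard hlt (Set.toFinite _)
          omega
        have hCc : Cᶜ.ncard ≤ n := by
          have hlt : Cᶜ ⊂ Aᶜ := by
            rw [Set.ssubset_iff_of_subset (Set.compl_subset_compl.mpr hAC.1)]
            obtain ⟨x, hxC, hxA⟩ := Set.exists_of_ssubset hAC
            exact ⟨x, by simpa using hxA, by simpa using hxC⟩
          have := Set.ncard_lt_ncard hlt (Set.toFinite _)
          omega
        have hBT := ih B hB hBc
        have hCT := ih C hC hCc
        have : ⋂₀ {B, C} ∈ T := by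
          refine hT2 {B, C} ?_ ⟨B, by simp⟩
          intro Z hZ
          rcases hZ with h | h
          · exact h ▸ hBT
          · exact (Set.mem_singleton_iff.mp h) ▸ hCT
        rwa [Set.sInter_pair, ← hABC] at this
  intro A hA
  exact key Aᶜ.ncard A hA le_rfl

/-- join complement. -/
theorem stmt_11 {α : Type*} [Fintype α] (F R : Set (Set α))
    (hF : IsClosureSystem F) (hR : DownF F R) :
    DownF F (genCS F (insert Set.univ {A | MeetIrredSet F A ∧ ¬ MeetIrredSet R A})) ∧
    genCS F (R ∪ genCS F (insert Set.univ {A | MeetIrredSet F A ∧ ¬ MeetIrredSet R A})) = F ∧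
    ∀ D : Set (Set α), DownF F D → genCS F (R ∪ D) = F →
      genCS F (insert Set.univ {A | MeetIrredSet F A ∧ ¬ MeetIrredSet R A}) ⊆ D := by
  classical
  set M : Set (Set α) := insert Set.univ {A | MeetIrredSet F A ∧ ¬ MeetIrredSet R A} with hM
  have hMF : M ⊆ F := by
    intro A hA
    rcases hA with h | h
    · exact h ▸ hF.1
    · exact h.1.1
  have hRhat : DownF F (genCS F M) := genCS_downF hF hMF
  refine ⟨hRhat, ?_, ?_⟩
  · -- join equals F
    have hXF : R ∪ genCS F M ⊆ F := Set.union_subset hR.2 hRhat.2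
    have hgen := genCS_downF hF hXF
    apply Set.Subset.antisymm (genCS_subset hF (le_refl F) hXF)
    -- F ⊆ genCS F (R ∪ genCS F M)
    intro A hA
    refine mem_of_irred hgen.1.1 hgen.1.2 ?_ A hA
    intro B hB
    by_cases hBR : MeetIrredSet R B
    · exact subset_genCS F _ (Or.inl hBR.1)
    · have hBM : B ∈ M := Or.inr ⟨hB, hBR⟩
      exact subset_genCS F _ (Or.inr (subset_genCS F M hBM))
  · -- minimality
    intro D hD hjoin
    refine genCS_subset hD.1 hD.2 ?_
    intro A hA
    rcases hA with h | h
    · exact h ▸ hD.1.1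
    obtain ⟨hAF, hAR⟩ := h
    -- the join of R and D is {X ∩ Y | X ∈ R, Y ∈ D}
    set T : Set (Set α) := {Z | ∃ X ∈ R, ∃ Y ∈ D, Z = X ∩ Y} with hT
    have hTcs : IsClosureSystem T := by
      constructor
      · exact ⟨Set.univ, hR.1.1, Set.univ, hD.1.1, (Set.univ_inter _).symm⟩
      · intro S hS hne
        have hS' : ∀ Z ∈ S, ∃ X ∈ R, ∃ Y ∈ D, Z = X ∩ Y := fun Z hZ => hS hZ
        choose! f hf g hg hfg using hS'
        refine ⟨⋂₀ (f '' S), hR.1.2 _ ?_ (hne.image f), ⋂₀ (g '' S),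
          hD.1.2 _ ?_ (hne.image g), ?_⟩
        · rintro W ⟨Z, hZ, rfl⟩; exact hf Z hZ
        · rintro W ⟨Z, hZ, rfl⟩; exact hg Z hZ
        · ext x
          simp only [Set.mem_sInter, Set.mem_inter_iff, Set.mem_image,
            forall_exists_index, and_imp]
          constructor
          · intro h
            constructor
            · rintro W Z hZ rfl
              have := h Z hZ
              rw [hfg Z hZ] at this
              exact this.1
            · rintro W Z hZ rfl
              have := h Z hZ
              rw [hfg Z hZ] at this
              exact this.2
          · rintro ⟨h1, h2⟩ Z hZ
            rw [hfg Z hZ]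
            exact ⟨h1 _ Z hZ rfl, h2 _ Z hZ rfl⟩
    have hTF : T ⊆ F := by
      rintro Z ⟨X, hX, Y, hY, rfl⟩
      have : ⋂₀ {X, Y} ∈ F := by
        refine hF.2 {X, Y} ?_ ⟨X, by simp⟩
        intro W hW
        rcases hW with h | h
        · exact h ▸ hR.2 hX
        · exact (Set.mem_singleton_iff.mp h) ▸ hD.2 hY
      rwa [Set.sInter_pair] at this
    have hRDT : R ∪ D ⊆ T := by
      rintro Z (hZ | hZ)
      · exact ⟨Z, hZ, Set.univ, hD.1.1, (Set.inter_univ _).symm⟩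
      · exact ⟨Set.univ, hR.1.1, Z, hZ, (Set.univ_inter _).symm⟩
    have hFT : F ⊆ T := hjoin ▸ genCS_subset hTcs hTF hRDT
    obtain ⟨X, hX, Y, hY, hAXY⟩ := hFT hAF.1
    have hAX : A ⊆ X := hAXY ▸ Set.inter_subset_left
    have hAY : A ⊆ Y := hAXY ▸ Set.inter_subset_right
    by_cases hAeqY : A = Y
    · exact hAeqY ▸ hY
    have hAeqX : A = X := by
      by_contra hne
      exact hAF.2.2 ⟨X, hR.2 hX, Y, hD.2 hY, ⟨hAX, fun h => hne (Set.Subset.antisymm hAX h)⟩,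
        ⟨hAY, fun h => hAeqY (Set.Subset.antisymm hAY h)⟩, hAXY⟩
    -- A ∈ R, A meet-irreducible in F, A ≠ univ → meet-irreducible in R, contradiction
    exfalso
    apply hAR
    refine ⟨hAeqX ▸ hX, hAF.2.1, ?_⟩
    rintro ⟨B, hB, C, hC, hAB, hAC, hABC⟩
    exact hAF.2.2 ⟨B, hR.2 hB, C, hR.2 hC, hAB, hAC, hABC⟩
end

section
/- Let F be a closure system on a finite set G. Then the lattice ↓F of all closure systems contained in F, ordered by inclusion, is lower semi-modular: for all X, Y ∈ ↓F, if X is covered by X ∨ Y then X ∧ Y is covered by Y. -/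
variable {α : Type*}

/-- ↓F is lower semi-modular. -/
theorem stmt_13 {α : Type*} [Fintype α] (F : Set (Set α)) (hF : IsClosureSystem F)
    (X Y : Set (Set α)) (hX : DownF F X) (hY : DownF F Y)
    (h : CoversIn F X (genCS F (X ∪ Y))) :
    CoversIn F (X ∩ Y) Y := by
  classical
  set J := genCS F (X ∪ Y) with hJdef
  set 𝒯 : Set (Set (Set α)) := {T | IsClosureSystem T ∧ T ⊆ F ∧ X ∪ Y ⊆ T} with h𝒯
  have hF𝒯 : F ∈ 𝒯 := ⟨hF, subset_rfl, Set.union_subset hX.2 hY.2⟩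
  have hJF : J ⊆ F := Set.sInter_subset_of_mem hF𝒯
  have hXJ : X ⊆ J := fun A hA => Set.mem_sInter.mpr fun T hT => hT.2.2 (Or.inl hA)
  have hYJ : Y ⊆ J := fun A hA => Set.mem_sInter.mpr fun T hT => hT.2.2 (Or.inr hA)
  have hJcs : IsClosureSystem J := by
    constructor
    · exact Set.mem_sInter.mpr fun T hT => hT.1.1
    · intro S hS hne
      refine Set.mem_sInter.mpr fun T hT => ?_
      exact hT.1.2 S (fun s hs => Set.mem_sInter.mp (hS hs) T hT) hne
  have hXsJ : X ⊂ J := h.2.2.1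
  have hnoT := h.2.2.2
  -- pick a minimal-cardinality element A of J \ X
  have hne : (J \ X).Nonempty := Set.diff_nonempty.mpr hXsJ.2
  obtain ⟨A, hA, hmin⟩ := Set.exists_min_image (J \ X) Set.ncard (Set.toFinite _) hne
  have hAJ : A ∈ J := hA.1
  have hAX : A ∉ X := hA.2
  have hXAJ : X ∪ {A} ⊆ J := Set.union_subset hXJ (by simpa using hAJ)
  -- X ∪ {A} is a closure system
  have hXAcs : IsClosureSystem (X ∪ {A}) := by
    constructor
    · exact Or.inl hX.1.1
    · intro S hS hne'
      by_cases hAS : A ∈ S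
      · have h1 : ⋂₀ S ∈ J := hJcs.2 S (hS.trans hXAJ) hne'
        have h2 : ⋂₀ S ⊆ A := Set.sInter_subset_of_mem hAS
        by_cases heq : ⋂₀ S = A
        · exact Or.inr (by simp [heq])
        · left
          by_contra hnotX
          have hmem : ⋂₀ S ∈ J \ X := ⟨h1, hnotX⟩
          have hlt : (⋂₀ S).ncard < A.ncard :=
            Set.ncard_lt_ncard (ssubset_of_subset_of_ne h2 heq) (Set.toFinite _)
          exact absurd (hmin _ hmem) (not_le_of_gt hlt)
      · left
        refine hX.1.2 S (fun s hs => ?_) hne'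
        rcases hS hs with h' | h'
        · exact h'
        · exact absurd (Set.mem_singleton_iff.mp h' ▸ hs) hAS
  -- J = X ∪ {A}
  have hJeq : J = X ∪ {A} := by
    have hssub : X ⊂ X ∪ {A} := by
      constructor
      · exact Set.subset_union_left
      · intro hsub
        exact hAX (hsub (Or.inr rfl))
    by_contra hne2
    exact hnoT ⟨X ∪ {A}, ⟨hXAcs, hXAJ.trans hJF⟩, hssub,
      ssubset_of_subset_of_ne hXAJ (fun e => hne2 e.symm)⟩
  -- Y is not contained in X
  have hYX : ¬ Y ⊆ X := by
    intro hYsub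
    have : J ⊆ X := Set.sInter_subset_of_mem
      (⟨hX.1, hX.2, Set.union_subset subset_rfl hYsub⟩ : X ∈ 𝒯)
    exact hXsJ.2 this
  obtain ⟨A', hA'Y, hA'X⟩ := Set.not_subset.mp hYX
  have hA'A : A' = A := by
    rcases hJeq ▸ hYJ hA'Y with h' | h'
    · exact absurd h' hA'X
    · exact h'
  have hAY : A ∈ Y := hA'A ▸ hA'Y
  -- now assemble the covering
  refine ⟨⟨⟨⟨hX.1.1, hY.1.1⟩, fun S hS hne' => ⟨hX.1.2 S (fun s hs => (hS hs).1) hne',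
      hY.1.2 S (fun s hs => (hS hs).2) hne'⟩⟩, (Set.inter_subset_left).trans hX.2⟩,
    hY, ?_, ?_⟩
  · constructor
    · exact Set.inter_subset_right
    · intro hsub
      exact hAX ((hsub hAY).1)
  · rintro ⟨T, _, hT1, hT2⟩
    obtain ⟨B, hBT, hBXY⟩ := Set.not_subset.mp hT1.2
    have hBY : B ∈ Y := hT2.1 hBT
    have hBX : B ∉ X := fun hBX => hBXY ⟨hBX, hBY⟩
    have hBA : B = A := by
      rcases hJeq ▸ hYJ hBY with h' | h'
      · exact absurd h' hBX
      · exact h'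
    apply hT2.2
    intro C hCY
    rcases hJeq ▸ hYJ hCY with h' | h'
    · exact hT1.1 ⟨h', hCY⟩
    · exact (Set.mem_singleton_iff.mp h' ▸ hBA ▸ hBT)
end

section
/- Let F be a closure system on a finite set G. Then the lattice ↓F of all closure systems contained in F is ranked by cardinality: if R is covered by R' in ↓F then |R| + 1 = |R'|. -/
variable {α : Type*}

/-!
If `R ⊊ R'` are closure systems and `A` is a minimal member of `R' \ R`, then `R ∪ {A}` is again a
closure system: for `B ∈ R` the meet `A ∩ B` lies in `R'`, so it is either in `R` or, by
minimality of `A`, equal to `A`. Since `R ∪ {A} ⊆ R'` stays in `↓F`, a cover `R ≺ R'` must have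
`R' = R ∪ {A}`.
-/

namespace IsClosureSystem

variable {R R' : Set (Set α)}

theorem sInter_mem (hR : IsClosureSystem R) {S : Set (Set α)} (hS : S ⊆ R) : ⋂₀ S ∈ R := by
  rcases S.eq_empty_or_nonempty with rfl | hne
  · simpa using hR.1
  · exact hR.2 S hS hne

theorem inter_mem_s14 (hR : IsClosureSystem R) {A B : Set α} (hA : A ∈ R) (hB : B ∈ R) :
    A ∩ B ∈ R := by
  simpa using hR.sInter_mem (Set.pair_subset hA hB)

theorem insert_of_inter_mem (hR : IsClosureSystem R) {A : Set α}
    (hA : ∀ B ∈ R, A ∩ B ∈ insert A R) :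
    IsClosureSystem (insert A R) := by
  refine ⟨Set.mem_insert_of_mem _ hR.1, fun S hS _ => ?_⟩
  have hSA : S \ {A} ⊆ R := fun B hB => (hS hB.1).resolve_left hB.2
  by_cases hAS : A ∈ S
  · rw [← Set.insert_sdiff_self_of_mem hAS, Set.sInter_insert]
    exact hA _ (hR.sInter_mem hSA)
  · rw [Set.sdiff_singleton_eq_self hAS] at hSA
    exact Set.mem_insert_of_mem _ (hR.sInter_mem hSA)

theorem insert_of_minimal_diff (hR : IsClosureSystem R) (hR' : IsClosureSystem R')
    (hRR' : R ⊆ R') {A : Set α} (hA : Minimal (· ∈ R' \ R) A) :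
    IsClosureSystem (insert A R) := by
  refine hR.insert_of_inter_mem fun B hB => ?_
  by_cases hAB : A ∩ B ∈ R
  · exact Set.mem_insert_of_mem _ hAB
  · have hAB' : A ∩ B ∈ R' \ R := ⟨hR'.inter_mem_s14 hA.1.1 (hRR' hB), hAB⟩
    rw [hA.eq_of_subset hAB' Set.inter_subset_left]
    exact Set.mem_insert _ _

end IsClosureSystem

theorem CoversIn.exists_eq_insert [Finite α] {F R R' : Set (Set α)} (h : CoversIn F R R') :
    ∃ A ∉ R, R' = insert A R := by
  obtain ⟨⟨hR, hRF⟩, ⟨hR', hR'F⟩, hRR', hcov⟩ := h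
  obtain ⟨A, hA⟩ := (R' \ R).toFinite.exists_minimal (Set.nonempty_of_ssubset hRR')
  refine ⟨A, hA.1.2, by_contra fun hne => hcov ⟨insert A R, ⟨?_, ?_⟩, ?_, ?_⟩⟩
  · exact IsClosureSystem.insert_of_minimal_diff hR hR' hRR'.subset hA
  · exact Set.insert_subset (hR'F hA.1.1) hRF
  · exact Set.ssubset_insert hA.1.2
  · exact (Set.insert_subset hA.1.1 hRR'.subset).ssubset_of_ne (Ne.symm hne)

theorem stmt_14_general {α : Type*} [Fintype α] (F R R' : Set (Set α))
    (h : CoversIn F R R') :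
    R.ncard + 1 = R'.ncard := by
  obtain ⟨A, hAR, rfl⟩ := h.exists_eq_insert
  exact (Set.ncard_insert_of_notMem hAR R.toFinite).symm

/-- ↓F is ranked by cardinality. -/
theorem stmt_14 {α : Type*} [Fintype α] (F R R' : Set (Set α))
    (hF : IsClosureSystem F) (h : CoversIn F R R') :
    R.ncard + 1 = R'.ncard :=
  stmt_14_general F R R' h
end

section
/- Let K = (G, M, I) be a finite formal context and let S be a family of extents of K with G ∈ S that is closed under intersection. Then the identity map on G is a scale-measure from K into the canonical scale (G, S, ∈), and the extents of (G, S, ∈) are exactly the members of S. -/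
/-- Attribute derivation. -/
def intentOf {G M : Type*} (I : G → M → Prop) (A : Set G) : Set M :=
  {m | ∀ g ∈ A, I g m}

/-- Object derivation. -/
def extentOf {G M : Type*} (I : G → M → Prop) (B : Set M) : Set G :=
  {g | ∀ m ∈ B, I g m}

/-- `A` is an extent of the context with incidence `I`. -/
def IsExtent {G M : Type*} (I : G → M → Prop) (A : Set G) : Prop :=
  extentOf I (intentOf I A) = A

lemma canonical_extent_iff {G : Type*} (S : Set (Set G)) (hG : Set.univ ∈ S)
    (hinter : ∀ T ⊆ S, T.Nonempty → ⋂₀ T ∈ S) (A : Set G) :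
    IsExtent (fun g (B : {B : Set G // B ∈ S}) => g ∈ B.val) A ↔ A ∈ S := by
  constructor
  · intro h
    have hA : extentOf (fun g (B : {B : Set G // B ∈ S}) => g ∈ B.val)
        (intentOf (fun g (B : {B : Set G // B ∈ S}) => g ∈ B.val) A)
        = ⋂₀ {B ∈ S | A ⊆ B} := by
      ext g
      simp only [extentOf, intentOf, Set.mem_setOf_eq, Set.mem_sInter]
      constructor
      · intro hg B hB
        exact hg ⟨B, hB.1⟩ hB.2
      · intro hg ⟨B, hB⟩ hAB
        exact hg B ⟨hB, hAB⟩
    rw [← h, hA]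
    exact hinter _ (fun B hB => hB.1) ⟨Set.univ, hG, Set.subset_univ A⟩
  · intro hA
    ext g
    simp only [extentOf, intentOf, Set.mem_setOf_eq]
    constructor
    · intro hg
      exact hg ⟨A, hA⟩ (fun x hx => hx)
    · intro hg B hB
      exact hB g hg

/-- for an intersection-closed family S of extents containing G,
the identity is a scale-measure into the canonical scale (G, S, ∈), whose
extents are exactly the members of S. -/
theorem stmt_18 {G M : Type*} [Fintype G] [Fintype M] (I : G → M → Prop)
    (S : Set (Set G)) (hext : ∀ A ∈ S, IsExtent I A) (hG : Set.univ ∈ S)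
    (hinter : ∀ T ⊆ S, T.Nonempty → ⋂₀ T ∈ S) :
    (∀ A : Set G, IsExtent (fun g (B : {B : Set G // B ∈ S}) => g ∈ B.val) A →
      IsExtent I (id ⁻¹' A)) ∧
    {A : Set G | IsExtent (fun g (B : {B : Set G // B ∈ S}) => g ∈ B.val) A} = S := by
  constructor
  · intro A hA
    have : A ∈ S := (canonical_extent_iff S hG hinter A).mp hA
    simpa using hext A this
  · ext A
    exact canonical_extent_iff S hG hinter A
end
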